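/- Let n be a positive integer and let f : {0,1}^n → ℝ be any function. Then there exist a natural number m and a multilinear polynomial g of degree at most 2 in n + m variables such that for every x ∈ {0,1}^n: min over a ∈ {0,1}^m of g(x, a) = f(x). -/

import Mathlib

def b2r (b : Bool) : ℝ := if b then 1 else 0

def IsMultilinearDeg (d n : ℕ) (g : (Fin n → ℝ) → ℝ) : Prop :=
  ∃ c : Finset (Fin n) → ℝ, (∀ S, d < S.card → c S = 0) ∧
    ∀ v, g v = ∑ S : Finset (Fin n), c S * ∏ i ∈ S, v i

/-!
Choose `C ≥ max f` and write `f x = C - ∑ y, w y * [x = y]` with weights `w y = C - f y ≥ 0`.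
Each indicator comes from one mediator bit `a_y`: the term `w y * a_y * (hammingDist y x - 1)` is
quadratic because the Hamming distance to a fixed `y` is affine in the bits of `x`, and its minimum
over `a_y ∈ {0, 1}` is `-w y` if `x = y` and `0` otherwise. The mediator terms involve disjoint
mediator bits, so the minimum of their sum is the sum of their minima.
-/

open Finset

namespace IsMultilinearDeg

variable {d n : ℕ} {g g' : (Fin n → ℝ) → ℝ}

theorem monomial {S : Finset (Fin n)} (hS : S.card ≤ d) :
    IsMultilinearDeg d n fun v => ∏ i ∈ S, v i := by
  refine ⟨fun T => if T = S then 1 else 0, fun T hT => if_neg ?_, fun v => ?_⟩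
  · rintro rfl
    omega
  · simp [ite_mul]

theorem add (hg : IsMultilinearDeg d n g) (hg' : IsMultilinearDeg d n g') :
    IsMultilinearDeg d n fun v => g v + g' v := by
  obtain ⟨c, hc, hgc⟩ := hg
  obtain ⟨c', hc', hgc'⟩ := hg'
  refine ⟨c + c', fun S hS => by simp [hc S hS, hc' S hS], fun v => ?_⟩
  simp only [hgc, hgc', Pi.add_apply, add_mul, sum_add_distrib]

theorem const_mul (r : ℝ) (hg : IsMultilinearDeg d n g) :
    IsMultilinearDeg d n fun v => r * g v := by
  obtain ⟨c, hc, hgc⟩ := hg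
  refine ⟨r • c, fun S hS => by simp [hc S hS], fun v => ?_⟩
  simp only [hgc, Pi.smul_apply, smul_eq_mul, mul_sum, mul_assoc]

theorem sub (hg : IsMultilinearDeg d n g) (hg' : IsMultilinearDeg d n g') :
    IsMultilinearDeg d n fun v => g v - g' v := by
  simpa only [neg_one_mul, ← sub_eq_add_neg] using hg.add (hg'.const_mul (-1))

theorem const (r : ℝ) : IsMultilinearDeg d n fun _ => r := by
  simpa using (monomial (S := ∅) (Nat.zero_le d)).const_mul r

theorem sum {ι : Type*} (s : Finset ι) {G : ι → (Fin n → ℝ) → ℝ}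
    (hG : ∀ i ∈ s, IsMultilinearDeg d n (G i)) :
    IsMultilinearDeg d n fun v => ∑ i ∈ s, G i v := by
  classical
  induction s using Finset.induction_on with
  | empty => simpa using const (d := d) (n := n) 0
  | insert i s hi ih =>
    simpa only [sum_insert hi] using
      (hG i (mem_insert_self i s)).add (ih fun j hj => hG j (mem_insert_of_mem hj))

theorem coord (hd : 1 ≤ d) (i : Fin n) : IsMultilinearDeg d n fun v => v i := by
  simpa using monomial (S := {i}) (by simpa using hd)

theorem coord_mul_coord (hd : 2 ≤ d) {i j : Fin n} (hij : i ≠ j) :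
    IsMultilinearDeg d n fun v => v i * v j := by
  simpa [prod_pair hij] using monomial (S := {i, j}) ((card_le_two).trans hd)

end IsMultilinearDeg

def mismatch (b : Bool) (t : ℝ) : ℝ := if b then 1 - t else t

theorem mismatch_b2r (b c : Bool) : mismatch b (b2r c) = if b = c then 0 else 1 := by
  cases b <;> cases c <;> norm_num [mismatch, b2r]

theorem sum_mismatch_b2r {ι : Type*} [Fintype ι] (y x : ι → Bool) :
    ∑ i, mismatch (y i) (b2r (x i)) = hammingDist y x := by
  simp only [mismatch_b2r, hammingDist, natCast_card_filter, ite_not]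

theorem IsMultilinearDeg.coord_mul_mismatch {d n : ℕ} (hd : 2 ≤ d) (b : Bool) {i j : Fin n}
    (hij : i ≠ j) : IsMultilinearDeg d n fun v => v i * mismatch b (v j) := by
  cases b
  · exact coord_mul_coord hd hij
  · simpa [mismatch, mul_sub] using (coord (by omega) i).sub (coord_mul_coord hd hij)

theorem isLeast_range_sum {ι α M : Type*} [Fintype ι] [AddCommMonoid M] [PartialOrder M]
    [IsOrderedAddMonoid M] {h : ι → α → M} {μ : ι → M}
    (hμ : ∀ i, IsLeast (Set.range (h i)) (μ i)) :
    IsLeast (Set.range fun a : ι → α => ∑ i, h i (a i)) (∑ i, μ i) := by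
  choose a ha using fun i => (hμ i).1
  refine ⟨⟨a, sum_congr rfl fun i _ => ha i⟩, ?_⟩
  rintro _ ⟨b, rfl⟩
  exact sum_le_sum fun i _ => (hμ i).2 ⟨b i, rfl⟩

theorem isLeast_range_mul_b2r_mul_sub_one {w : ℝ} (hw : 0 ≤ w) (k : ℕ) :
    IsLeast (Set.range fun b : Bool => w * (b2r b * (k - 1))) (if k = 0 then -w else 0) := by
  split_ifs with hk
  · refine ⟨⟨true, by simp [b2r, hk]⟩, ?_⟩
    rintro _ ⟨b, rfl⟩
    cases b <;> simp [b2r, hk, hw]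
  · have hk1 : (1 : ℝ) ≤ k := by exact_mod_cast Nat.one_le_iff_ne_zero.2 hk
    refine ⟨⟨false, by simp [b2r]⟩, ?_⟩
    rintro _ ⟨b, rfl⟩
    cases b
    · simp [b2r]
    · simpa [b2r] using mul_nonneg hw (sub_nonneg.2 hk1)

section MediatorPolynomial

variable {n m : ℕ} (C : ℝ) (w : Fin m → ℝ) (y : Fin m → Fin n → Bool)

def mediatorPolynomial (v : Fin (n + m) → ℝ) : ℝ :=
  C + ∑ j, w j * (v (Fin.natAdd n j) * (∑ i, mismatch (y j i) (v (Fin.castAdd m i)) - 1))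

theorem isMultilinearDeg_mediatorPolynomial :
    IsMultilinearDeg 2 (n + m) (mediatorPolynomial C w y) := by
  have hne (j : Fin m) (i : Fin n) : Fin.natAdd n j ≠ Fin.castAdd m i := by
    simp only [ne_eq, Fin.ne_iff_vne, Fin.val_natAdd, Fin.val_castAdd]
    omega
  have hexpand : mediatorPolynomial C w y = fun v => C + ∑ j,
      (w j * ∑ i, v (Fin.natAdd n j) * mismatch (y j i) (v (Fin.castAdd m i))
        - w j * v (Fin.natAdd n j)) := by
    funext v
    simp only [mediatorPolynomial, mul_sub, mul_sum, mul_one]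
  rw [hexpand]
  open IsMultilinearDeg in
  exact (const C).add <| sum _ fun j _ =>
    ((sum _ fun i _ => coord_mul_mismatch le_rfl _ (hne j i)).const_mul _).sub
      ((coord one_le_two _).const_mul _)

theorem mediatorPolynomial_append (x : Fin n → Bool) (a : Fin m → Bool) :
    mediatorPolynomial C w y (Fin.append (fun i => b2r (x i)) fun j => b2r (a j)) =
      C + ∑ j, w j * (b2r (a j) * (hammingDist (y j) x - 1)) := by
  simp only [mediatorPolynomial, Fin.append_left, Fin.append_right, sum_mismatch_b2r]

theorem isLeast_mediatorPolynomial (hw : ∀ j, 0 ≤ w j) (x : Fin n → Bool) :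
    IsLeast (Set.range fun a : Fin m → Bool =>
        mediatorPolynomial C w y (Fin.append (fun i => b2r (x i)) fun j => b2r (a j)))
      (C + ∑ j, if y j = x then -w j else 0) := by
  simp only [mediatorPolynomial_append, ← hammingDist_eq_zero]
  rw [← Function.comp_def (C + ·), Set.range_comp]
  exact (monotone_id.const_add C).map_isLeast <|
    isLeast_range_sum fun j => isLeast_range_mul_b2r_mul_sub_one (hw j) _

end MediatorPolynomial

theorem diagonal_hamiltonian_two_local_reduction
    (n : ℕ) (f : (Fin n → Bool) → ℝ) :
    ∃ (m : ℕ) (g : (Fin (n + m) → ℝ) → ℝ),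
      IsMultilinearDeg 2 (n + m) g ∧
      ∀ x : Fin n → Bool,
        IsLeast {r : ℝ | ∃ a : Fin m → Bool,
            g (Fin.append (fun i => b2r (x i)) (fun j => b2r (a j))) = r}
          (f x) := by
  obtain ⟨C, hC⟩ := Finite.exists_le f
  let e := Fintype.equivFin (Fin n → Bool)
  refine ⟨_, mediatorPolynomial C (fun j => C - f (e.symm j)) e.symm,
    isMultilinearDeg_mediatorPolynomial .., fun x => ?_⟩
  have key := isLeast_mediatorPolynomial C (fun j => C - f (e.symm j)) e.symm
    (fun j => sub_nonneg.2 (hC _)) x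
  rw [e.symm.sum_comp fun y => if y = x then -(C - f y) else 0] at key
  simp only [Finset.sum_ite_eq', mem_univ, if_true, neg_sub, add_sub_cancel] at key
  exact key
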